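/- arXiv:1410.1578 — 5 statements merged into one kernel-verified Lean document; each statement's English description precedes it below -/
import Mathlib

section
/- Let G be a finite group and (ρ, V) an irreducible finite-dimensional complex representation of G. Then Ad(ρ) is irreducible if and only if both Sym²(ρ) and Λ²(ρ) are irreducible. -/
/-!
Both sides say that a commutant `End_G(W)` is two-dimensional. If `W = U₁ ⊕ U₂` with `U₁, U₂`
nonzero invariant subspaces of different dimensions, then by Schur's lemma both summands are
irreducible iff every equivariant endomorphism acts on each `Uᵢ` by a scalar, i.e. iff
`End_G(W)` is spanned by the two projections; conversely, by Maschke's theorem, a reducible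
summand produces an equivariant projection outside that span. Apply this to
`End V = ℂ·1 ⊕ sl(V)` (dimensions `1` and `n² - 1`) and to `V ⊗ V = Sym² V ⊕ Λ² V`
(dimensions `n(n+1)/2` and `n(n-1)/2`). The two commutants have the same dimension, since by the
character formula for invariants both equal `|G|⁻¹ ∑_g χ(g)² χ(g⁻¹)²`.
-/

open Module LinearMap

variable {G : Type*} [Group G] {V : Type*} [AddCommGroup V] [Module ℂ V]

/-- A submodule is invariant under a representation. -/
def Representation.IsInvariant (ρ : Representation ℂ G V) (U : Submodule ℂ V) : Prop :=
  ∀ g : G, ∀ v ∈ U, ρ g v ∈ U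

/-- Irreducibility of a representation. -/
def Representation.IsIrreducible' (ρ : Representation ℂ G V) : Prop :=
  Nontrivial V ∧ ∀ U : Submodule ℂ V, ρ.IsInvariant U → U = ⊥ ∨ U = ⊤

/-- Irreducibility of the subrepresentation carried by an invariant submodule `U`. -/
def Representation.IsIrreducibleOn (ρ : Representation ℂ G V) (U : Submodule ℂ V) : Prop :=
  U ≠ ⊥ ∧ ∀ U' ≤ U, ρ.IsInvariant U' → U' = ⊥ ∨ U' = U

/-- `Ad ρ` is irreducible: the conjugation action on trace-zero endomorphisms is irreducible. -/
def Representation.AdIrreducible (ρ : Representation ℂ G V) : Prop :=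
  (ρ.linHom ρ).IsIrreducibleOn (LinearMap.ker (LinearMap.trace ℂ V))

/-- Isomorphism of representations. -/
def RepEquiv {V₁ V₂ : Type*} [AddCommGroup V₁] [Module ℂ V₁] [AddCommGroup V₂] [Module ℂ V₂]
    (ρ₁ : Representation ℂ G V₁) (ρ₂ : Representation ℂ G V₂) : Prop :=
  ∃ e : V₁ ≃ₗ[ℂ] V₂, ∀ g v, e (ρ₁ g v) = ρ₂ g (e v)

/-- The subrepresentation on an invariant submodule. -/
def Representation.subRep (ρ : Representation ℂ G V) (U : Submodule ℂ V)
    (h : ρ.IsInvariant U) : Representation ℂ G U where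
  toFun g := (ρ g).restrict (fun v hv => h g v hv)
  map_one' := by ext v; simp [LinearMap.restrict_apply]
  map_mul' g₁ g₂ := by ext v; simp [LinearMap.restrict_apply]

lemma sl_invariant [FiniteDimensional ℂ V] (ρ : Representation ℂ G V) :
    (ρ.linHom ρ).IsInvariant (LinearMap.ker (LinearMap.trace ℂ V)) := by
  intro g f hf
  simp only [LinearMap.mem_ker] at hf ⊢
  simp only [Representation.linHom_apply]
  rw [← Module.End.mul_eq_comp, ← Module.End.mul_eq_comp, LinearMap.trace_mul_comm]
  rw [mul_assoc, ← map_mul, inv_mul_cancel, map_one, mul_one, hf]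

/-- The adjoint representation on trace-zero endomorphisms. -/
noncomputable def Representation.adRep [FiniteDimensional ℂ V] (ρ : Representation ℂ G V) :
    Representation ℂ G (LinearMap.ker (LinearMap.trace ℂ V)) :=
  (ρ.linHom ρ).subRep _ (sl_invariant ρ)

open TensorProduct in
/-- The symmetric square of `V`, realized as the submodule of symmetric tensors in `V ⊗ V`. -/
def symSquare (V : Type*) [AddCommGroup V] [Module ℂ V] : Submodule ℂ (V ⊗[ℂ] V) :=
  Submodule.span ℂ {x | ∃ v w : V, x = v ⊗ₜ[ℂ] w + w ⊗ₜ[ℂ] v}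

open TensorProduct in
/-- The alternating square of `V`, realized as the submodule of antisymmetric tensors in
`V ⊗ V`. -/
def altSquare (V : Type*) [AddCommGroup V] [Module ℂ V] : Submodule ℂ (V ⊗[ℂ] V) :=
  Submodule.span ℂ {x | ∃ v w : V, x = v ⊗ₜ[ℂ] w - w ⊗ₜ[ℂ] v}

namespace Submodule

variable {K E : Type*} [Field K] [AddCommGroup E] [Module K E] {U₁ U₂ : Submodule K E}

lemma mem_span_projection_pair_iff (hc : IsCompl U₁ U₂) {f : Module.End K E} :
    f ∈ span K {U₁.projection U₂ hc, U₂.projection U₁ hc.symm} ↔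
      ∃ a b : K, (∀ v ∈ U₁, f v = a • v) ∧ ∀ v ∈ U₂, f v = b • v := by
  rw [mem_span_pair]
  constructor
  · rintro ⟨a, b, rfl⟩
    refine ⟨a, b, fun v hv => ?_, fun v hv => ?_⟩
    · simp [projection_apply_of_mem_left hc hv, projection_apply_of_mem_right hc.symm hv]
    · simp [projection_apply_of_mem_right hc hv, projection_apply_of_mem_left hc.symm hv]
  · rintro ⟨a, b, ha, hb⟩
    refine ⟨a, b, LinearMap.ext fun v => ?_⟩
    conv_rhs => rw [← projection_add_projection_eq_self hc v]
    simp [ha _ (projection_apply_mem hc v), hb _ (projection_apply_mem hc.symm v)]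

lemma finrank_span_projection_pair (hc : IsCompl U₁ U₂) (h₁ : U₁ ≠ ⊥) (h₂ : U₂ ≠ ⊥) :
    finrank K (span K {U₁.projection U₂ hc, U₂.projection U₁ hc.symm}) = 2 := by
  obtain ⟨u₁, hu₁, hu₁0⟩ := exists_mem_ne_zero_of_ne_bot h₁
  obtain ⟨u₂, hu₂, hu₂0⟩ := exists_mem_ne_zero_of_ne_bot h₂
  have hli : LinearIndependent K ![U₁.projection U₂ hc, U₂.projection U₁ hc.symm] := by
    refine LinearIndependent.pair_iff.2 fun s t hst => ⟨?_, ?_⟩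
    · simpa [projection_apply_of_mem_left hc hu₁, projection_apply_of_mem_right hc.symm hu₁,
        hu₁0] using LinearMap.congr_fun hst u₁
    · simpa [projection_apply_of_mem_right hc hu₂, projection_apply_of_mem_left hc.symm hu₂,
        hu₂0] using LinearMap.congr_fun hst u₂
  rw [← Matrix.range_cons_cons_empty, finrank_span_eq_card hli, Fintype.card_fin]

end Submodule

namespace LinearMap

variable [FiniteDimensional ℂ V]

lemma trace_one_ne_zero (hV : finrank ℂ V ≠ 0) : trace ℂ V 1 ≠ 0 := by
  simpa using hV

lemma finrank_ker_trace_add_one (hV : finrank ℂ V ≠ 0) :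
    finrank ℂ (ker (trace ℂ V)) + 1 = finrank ℂ V * finrank ℂ V := by
  rw [Module.Dual.finrank_ker_add_one_of_ne_zero (ne_of_apply_ne (· 1) (trace_one_ne_zero hV)),
    finrank_linearMap]

lemma isCompl_ker_trace_span_one (hV : finrank ℂ V ≠ 0) :
    IsCompl (ker (trace ℂ V)) (ℂ ∙ (1 : Module.End ℂ V)) := by
  have : Nontrivial V := Module.nontrivial_of_finrank_pos (R := ℂ) (Nat.pos_of_ne_zero hV)
  refine Module.Dual.isCompl_ker_of_disjoint_of_ne_bot
    (ne_of_apply_ne (· 1) (trace_one_ne_zero hV))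
    ((Submodule.disjoint_span_singleton' one_ne_zero).2 (trace_one_ne_zero hV)) ?_
  rw [Ne, Submodule.span_singleton_eq_bot]
  exact one_ne_zero

end LinearMap

section Squares

open TensorProduct

lemma comm_apply_of_mem_symSquare {x : V ⊗[ℂ] V} (hx : x ∈ symSquare V) :
    TensorProduct.comm ℂ V V x = x := by
  induction hx using Submodule.span_induction with
  | mem x hx => obtain ⟨v, w, rfl⟩ := hx; simp [add_comm]
  | zero => simp
  | add x y _ _ hx hy => simp [hx, hy]
  | smul a x _ hx => simp [hx]

lemma comm_apply_of_mem_altSquare {x : V ⊗[ℂ] V} (hx : x ∈ altSquare V) :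
    TensorProduct.comm ℂ V V x = -x := by
  induction hx using Submodule.span_induction with
  | mem x hx => obtain ⟨v, w, rfl⟩ := hx; simp
  | zero => simp
  | add x y _ _ hx hy => simp [hx, hy, add_comm]
  | smul a x _ hx => simp [hx]

lemma add_comm_apply_mem_symSquare (x : V ⊗[ℂ] V) :
    x + TensorProduct.comm ℂ V V x ∈ symSquare V := by
  induction x using TensorProduct.induction_on with
  | zero => simp
  | tmul v w => exact Submodule.subset_span ⟨v, w, rfl⟩
  | add x y hx hy => simpa [add_add_add_comm] using add_mem hx hy

lemma sub_comm_apply_mem_altSquare (x : V ⊗[ℂ] V) :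
    x - TensorProduct.comm ℂ V V x ∈ altSquare V := by
  induction x using TensorProduct.induction_on with
  | zero => simp
  | tmul v w => exact Submodule.subset_span ⟨v, w, rfl⟩
  | add x y hx hy => simpa [add_sub_add_comm] using add_mem hx hy

lemma isCompl_symSquare_altSquare : IsCompl (symSquare V) (altSquare V) := by
  refine ⟨Submodule.disjoint_def.2 fun x hs ha => ?_, codisjoint_iff.2 (eq_top_iff.2 fun x _ => ?_)⟩
  · have : IsAddTorsionFree (V ⊗[ℂ] V) := .of_isTorsionFree ℂ _
    exact self_eq_neg.1 <|
      (comm_apply_of_mem_symSquare hs).symm.trans (comm_apply_of_mem_altSquare ha)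
  · have hx : x = (2 : ℂ)⁻¹ • (x + TensorProduct.comm ℂ V V x) +
        (2 : ℂ)⁻¹ • (x - TensorProduct.comm ℂ V V x) := by module
    rw [hx]
    exact Submodule.add_mem_sup (Submodule.smul_mem _ _ (add_comm_apply_mem_symSquare x))
      (Submodule.smul_mem _ _ (sub_comm_apply_mem_altSquare x))

variable [FiniteDimensional ℂ V]

lemma trace_tensorProductComm :
    trace ℂ (V ⊗[ℂ] V) (TensorProduct.comm ℂ V V) = finrank ℂ V := by
  let b := Module.finBasis ℂ V
  rw [trace_eq_matrix_trace ℂ (b.tensorProduct b), Matrix.trace, Fintype.sum_prod_type]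
  simp [LinearMap.toMatrix_apply, Finsupp.single_apply]

lemma finrank_symSquare_add_finrank_altSquare :
    finrank ℂ (symSquare V) + finrank ℂ (altSquare V) = finrank ℂ V * finrank ℂ V := by
  rw [Submodule.finrank_add_eq_of_isCompl isCompl_symSquare_altSquare, finrank_tensorProduct]

/-- The flip `τ` is the difference of the projections onto `Sym² V` and `Λ² V`, and `tr τ = n`. -/
lemma finrank_symSquare_eq_finrank_altSquare_add :
    finrank ℂ (symSquare V) = finrank ℂ (altSquare V) + finrank ℂ V := by
  let τ : Module.End ℂ (V ⊗[ℂ] V) := TensorProduct.comm ℂ V V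
  have hsym : IsProj (symSquare V) ((2 : ℂ)⁻¹ • (1 + τ)) :=
    ⟨fun x => Submodule.smul_mem _ _ (add_comm_apply_mem_symSquare x),
      fun x hx => by
        simp only [smul_add, LinearMap.add_apply, LinearMap.smul_apply, End.one_apply,
          LinearEquiv.coe_coe, comm_apply_of_mem_symSquare hx, τ]
        module⟩
  have halt : IsProj (altSquare V) ((2 : ℂ)⁻¹ • (1 - τ)) :=
    ⟨fun x => Submodule.smul_mem _ _ (sub_comm_apply_mem_altSquare x),
      fun x hx => by
        simp only [LinearMap.smul_apply, LinearMap.sub_apply, End.one_apply, LinearEquiv.coe_coe,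
          comm_apply_of_mem_altSquare hx, sub_neg_eq_add, smul_add, τ]
        module⟩
  have hτ : (2 : ℂ)⁻¹ • (1 + τ) - (2 : ℂ)⁻¹ • (1 - τ) = τ := by module
  apply Nat.cast_injective (R := ℂ)
  rw [Nat.cast_add, ← hsym.trace, ← halt.trace, ← sub_eq_iff_eq_add', ← map_sub, hτ,
    trace_tensorProductComm]

end Squares

namespace Representation

variable {σ : Representation ℂ G V}

noncomputable abbrev commutant (σ : Representation ℂ G V) : Submodule ℂ (Module.End ℂ V) :=
  (σ.linHom σ).invariants

lemma mem_commutant_iff {f : Module.End ℂ V} : f ∈ σ.commutant ↔ ∀ g, Commute f (σ g) := by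
  refine forall_congr' fun g => ?_
  rw [linHom_apply, ← Module.End.mul_eq_comp, ← Module.End.mul_eq_comp, commute_iff_eq]
  constructor
  · intro h
    calc f * σ g = σ g * (f * σ g⁻¹) * σ g := by rw [h]
      _ = σ g * f := by rw [mul_assoc, mul_assoc, ← map_mul, inv_mul_cancel, map_one, mul_one]
  · intro h
    rw [← mul_assoc, ← h, mul_assoc, ← map_mul, mul_inv_cancel, map_one, mul_one]

lemma apply_apply_of_mem_commutant {f : Module.End ℂ V} (hf : f ∈ σ.commutant) (g : G) (v : V) :
    f (σ g v) = σ g (f v) :=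
  LinearMap.congr_fun ((mem_commutant_iff.1 hf g).eq) v

lemma one_mem_commutant : (1 : Module.End ℂ V) ∈ σ.commutant :=
  mem_commutant_iff.2 fun _ => Commute.one_left _

lemma mul_mem_commutant {f f' : Module.End ℂ V} (hf : f ∈ σ.commutant) (hf' : f' ∈ σ.commutant) :
    f * f' ∈ σ.commutant :=
  mem_commutant_iff.2 fun g => (mem_commutant_iff.1 hf g).mul_left (mem_commutant_iff.1 hf' g)

lemma IsInvariant.inf {U U' : Submodule ℂ V} (hU : σ.IsInvariant U) (hU' : σ.IsInvariant U') :
    σ.IsInvariant (U ⊓ U') :=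
  fun g v hv => ⟨hU g v hv.1, hU' g v hv.2⟩

lemma IsInvariant.map {U : Submodule ℂ V} (hU : σ.IsInvariant U) {f : Module.End ℂ V}
    (hf : f ∈ σ.commutant) : σ.IsInvariant (U.map f) := by
  rintro g _ ⟨v, hv, rfl⟩
  exact ⟨σ g v, hU g v hv, apply_apply_of_mem_commutant hf g v⟩

lemma isInvariant_ker {f : Module.End ℂ V} (hf : f ∈ σ.commutant) : σ.IsInvariant (ker f) := by
  intro g v hv
  rw [mem_ker, apply_apply_of_mem_commutant hf, mem_ker.1 hv, map_zero]

lemma isInvariant_span_of_mapsTo {S : Set V} (hS : ∀ g, Set.MapsTo (σ g) S S) :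
    σ.IsInvariant (Submodule.span ℂ S) := by
  intro g v hv
  have : (Submodule.span ℂ S).map (σ g) ≤ Submodule.span ℂ S := by
    rw [Submodule.map_span]
    exact Submodule.span_mono (hS g).image_subset
  exact this ⟨v, hv, rfl⟩

lemma projection_mem_commutant {U U' : Submodule ℂ V} (hU : σ.IsInvariant U)
    (hU' : σ.IsInvariant U') (hc : IsCompl U U') : U.projection U' hc ∈ σ.commutant := by
  refine mem_commutant_iff.2 fun g => (Submodule.isIdempotentElem_projection hc).commute_iff.2 ?_
  rw [Submodule.range_projection, Submodule.ker_projection]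
  exact ⟨fun v hv => hU g v hv, fun v hv => hU' g v hv⟩

lemma IsInvariant.exists_isCompl [Finite G] {U : Submodule ℂ V} (hU : σ.IsInvariant U) :
    ∃ U', σ.IsInvariant U' ∧ IsCompl U U' := by
  obtain ⟨U', hc⟩ :=
    ComplementedLattice.exists_isCompl (⟨U, fun g v hv => hU g v hv⟩ : Subrepresentation σ)
  refine ⟨U'.toSubmodule, fun g v hv => U'.apply_mem_toSubmodule g hv,
    disjoint_iff.2 ?_, codisjoint_iff.2 ?_⟩
  · exact congrArg Subrepresentation.toSubmodule hc.inf_eq_bot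
  · exact congrArg Subrepresentation.toSubmodule hc.sup_eq_top

/-- For `N ≤ U` invariant, the projection onto `N` along an invariant complement acts on `U` by a
scalar, which is either `0` (so `N = ⊥`) or invertible (so `N = U`). -/
lemma isIrreducibleOn_of_forall_mem_commutant [Finite G] {U : Submodule ℂ V} (hU : U ≠ ⊥)
    (h : ∀ f ∈ σ.commutant, ∃ a : ℂ, ∀ v ∈ U, f v = a • v) : σ.IsIrreducibleOn U := by
  refine ⟨hU, fun N hN hNinv => ?_⟩
  obtain ⟨N', hN'inv, hc⟩ := hNinv.exists_isCompl
  obtain ⟨a, ha⟩ := h _ (projection_mem_commutant hNinv hN'inv hc)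
  by_cases ha0 : a = 0
  · refine Or.inl (eq_bot_iff.2 fun v hv => ?_)
    rw [Submodule.mem_bot, ← Submodule.projection_apply_of_mem_left hc hv, ha v (hN hv), ha0,
      zero_smul]
  · refine Or.inr (le_antisymm hN fun v hv => ?_)
    rw [← inv_smul_smul₀ ha0 v, ← ha v hv]
    exact N.smul_mem _ (Submodule.projection_apply_mem hc v)

lemma isInvariant_span_one (ρ : Representation ℂ G V) :
    (ρ.linHom ρ).IsInvariant (ℂ ∙ (1 : Module.End ℂ V)) :=
  isInvariant_span_of_mapsTo fun g => Set.mapsTo_singleton.2 (one_mem_commutant g)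

lemma isInvariant_symSquare (ρ : Representation ℂ G V) : (ρ.tprod ρ).IsInvariant (symSquare V) :=
  isInvariant_span_of_mapsTo fun g => by
    rintro _ ⟨v, w, rfl⟩
    exact ⟨ρ g v, ρ g w, by simp [tprod_apply]⟩

lemma isInvariant_altSquare (ρ : Representation ℂ G V) : (ρ.tprod ρ).IsInvariant (altSquare V) :=
  isInvariant_span_of_mapsTo fun g => by
    rintro _ ⟨v, w, rfl⟩
    exact ⟨ρ g v, ρ g w, by simp [tprod_apply]⟩

section FiniteDimensional

variable [FiniteDimensional ℂ V]

lemma IsIrreducibleOn.exists_eq_smul {U : Submodule ℂ V} (hirr : σ.IsIrreducibleOn U)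
    (hU : σ.IsInvariant U) {f : Module.End ℂ V} (hf : f ∈ σ.commutant)
    (hfU : ∀ v ∈ U, f v ∈ U) : ∃ a : ℂ, ∀ v ∈ U, f v = a • v := by
  have : Nontrivial U := Submodule.nontrivial_iff_ne_bot.2 hirr.1
  obtain ⟨a, ha⟩ := Module.End.exists_eigenvalue (f.restrict hfU)
  obtain ⟨x, hx⟩ := ha.exists_hasEigenvector
  have hfa : f - a • 1 ∈ σ.commutant :=
    sub_mem hf (Submodule.smul_mem _ a one_mem_commutant)
  have hx_mem : (x : V) ∈ U ⊓ ker (f - a • 1) := by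
    refine ⟨x.2, ?_⟩
    simpa [sub_eq_zero] using congrArg Subtype.val hx.apply_eq_smul
  have hK : U ⊓ ker (f - a • 1) = U := by
    refine (hirr.2 _ inf_le_left (hU.inf (isInvariant_ker hfa))).resolve_left fun h => ?_
    rw [h, Submodule.mem_bot] at hx_mem
    exact hx.2 (Subtype.ext hx_mem)
  refine ⟨a, fun v hv => ?_⟩
  have := (hK.symm ▸ hv : v ∈ U ⊓ ker (f - a • 1)).2
  simpa [sub_eq_zero] using this

lemma IsIrreducibleOn.eq_zero_of_finrank_ne {U U' : Submodule ℂ V} (hirr : σ.IsIrreducibleOn U)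
    (hirr' : σ.IsIrreducibleOn U') (hU : σ.IsInvariant U) (hd : finrank ℂ U ≠ finrank ℂ U')
    {f : Module.End ℂ V} (hf : f ∈ σ.commutant) (hfU : ∀ v ∈ U, f v ∈ U') :
    ∀ v ∈ U, f v = 0 := by
  rcases hirr.2 _ inf_le_left (hU.inf (isInvariant_ker hf)) with h | h
  · have hinj : Function.Injective (f.domRestrict U) := by
      rw [injective_domRestrict_iff, disjoint_iff, h]
    have hrank : finrank ℂ (U.map f) = finrank ℂ U := by
      rw [← range_domRestrict, finrank_range_of_inj hinj]
    have hmap : U.map f = U' := by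
      refine (hirr'.2 _ (Submodule.map_le_iff_le_comap.2 hfU) (hU.map hf)).resolve_left
        fun h0 => hirr.1 (Submodule.finrank_eq_zero.1 ?_)
      rw [← hrank, h0, finrank_bot]
    exact absurd (hmap ▸ hrank.symm) hd
  · exact fun v hv => (h.symm ▸ hv : v ∈ U ⊓ ker f).2

lemma isIrreducibleOn_of_finrank_eq_one {U : Submodule ℂ V} (hU : finrank ℂ U = 1) :
    σ.IsIrreducibleOn U := by
  refine ⟨fun h => by simp [Submodule.finrank_eq_zero.2 h] at hU,
    fun N hN _ => or_iff_not_imp_left.2 fun hN0 => Submodule.eq_of_le_of_finrank_le hN ?_⟩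
  rwa [hU, Submodule.one_le_finrank_iff]

variable {U₁ U₂ : Submodule ℂ V}

lemma exists_eq_smul_of_isCompl (h₁ : σ.IsInvariant U₁) (h₂ : σ.IsInvariant U₂)
    (hc : IsCompl U₁ U₂) (irr₁ : σ.IsIrreducibleOn U₁) (irr₂ : σ.IsIrreducibleOn U₂)
    (hd : finrank ℂ U₁ ≠ finrank ℂ U₂) {f : Module.End ℂ V} (hf : f ∈ σ.commutant) :
    ∃ a : ℂ, ∀ v ∈ U₁, f v = a • v := by
  obtain ⟨a, ha⟩ := irr₁.exists_eq_smul h₁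
    (mul_mem_commutant (projection_mem_commutant h₁ h₂ hc) hf)
    fun v _ => Submodule.projection_apply_mem hc (f v)
  have h0 := irr₁.eq_zero_of_finrank_ne irr₂ h₁ hd
    (mul_mem_commutant (projection_mem_commutant h₂ h₁ hc.symm) hf)
    fun v _ => Submodule.projection_apply_mem hc.symm (f v)
  refine ⟨a, fun v hv => ?_⟩
  rw [← Submodule.projection_add_projection_eq_self hc (f v)]
  simpa using congrArg₂ (· + ·) (ha v hv) (h0 v hv)

variable [Finite G]

theorem isIrreducibleOn_and_isIrreducibleOn_iff_finrank_commutant_eq_two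
    (h₁ : σ.IsInvariant U₁) (h₂ : σ.IsInvariant U₂) (hc : IsCompl U₁ U₂) (hU₁ : U₁ ≠ ⊥)
    (hU₂ : U₂ ≠ ⊥) (hd : finrank ℂ U₁ ≠ finrank ℂ U₂) :
    σ.IsIrreducibleOn U₁ ∧ σ.IsIrreducibleOn U₂ ↔ finrank ℂ σ.commutant = 2 := by
  set S := Submodule.span ℂ {U₁.projection U₂ hc, U₂.projection U₁ hc.symm}
  have hS : S ≤ σ.commutant := Submodule.span_le.2 <| Set.insert_subset
    (projection_mem_commutant h₁ h₂ hc)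
    (Set.singleton_subset_iff.2 (projection_mem_commutant h₂ h₁ hc.symm))
  have hS2 : finrank ℂ S = 2 := Submodule.finrank_span_projection_pair hc hU₁ hU₂
  constructor
  · rintro ⟨irr₁, irr₂⟩
    suffices σ.commutant ≤ S by rw [le_antisymm this hS, hS2]
    intro f hf
    obtain ⟨a, ha⟩ := exists_eq_smul_of_isCompl h₁ h₂ hc irr₁ irr₂ hd hf
    obtain ⟨b, hb⟩ := exists_eq_smul_of_isCompl h₂ h₁ hc.symm irr₂ irr₁ hd.symm hf
    exact (Submodule.mem_span_projection_pair_iff hc).2 ⟨a, b, ha, hb⟩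
  · intro h2
    have hSeq : S = σ.commutant := Submodule.eq_of_le_of_finrank_eq hS (hS2.trans h2.symm)
    refine ⟨isIrreducibleOn_of_forall_mem_commutant hU₁ fun f hf => ?_,
      isIrreducibleOn_of_forall_mem_commutant hU₂ fun f hf => ?_⟩
    · obtain ⟨a, -, ha, -⟩ := (Submodule.mem_span_projection_pair_iff hc).1 (hSeq ▸ hf)
      exact ⟨a, ha⟩
    · obtain ⟨-, b, -, hb⟩ := (Submodule.mem_span_projection_pair_iff hc).1 (hSeq ▸ hf)
      exact ⟨b, hb⟩

theorem adIrreducible_iff_finrank_commutant_eq_two (ρ : Representation ℂ G V)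
    (hV : 2 ≤ finrank ℂ V) : ρ.AdIrreducible ↔ finrank ℂ (ρ.linHom ρ).commutant = 2 := by
  have : Nontrivial V := Module.nontrivial_of_finrank_pos (R := ℂ) (by omega)
  have hspan : finrank ℂ (ℂ ∙ (1 : Module.End ℂ V)) = 1 := finrank_span_singleton one_ne_zero
  have hker := finrank_ker_trace_add_one (V := V) (by omega)
  have hV2 : 4 ≤ finrank ℂ V * finrank ℂ V := Nat.mul_le_mul hV hV
  have hker0 : finrank ℂ (ker (trace ℂ V)) ≠ 0 := by omega
  have hspan0 : finrank ℂ (ℂ ∙ (1 : Module.End ℂ V)) ≠ 0 := by omega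
  have hd : finrank ℂ (ker (trace ℂ V)) ≠ finrank ℂ (ℂ ∙ (1 : Module.End ℂ V)) := by omega
  rw [← isIrreducibleOn_and_isIrreducibleOn_iff_finrank_commutant_eq_two (sl_invariant ρ)
    (isInvariant_span_one ρ) (isCompl_ker_trace_span_one (by omega))
    (Submodule.finrank_eq_zero.not.1 hker0) (Submodule.finrank_eq_zero.not.1 hspan0) hd]
  exact (and_iff_left (isIrreducibleOn_of_finrank_eq_one hspan)).symm

theorem isIrreducibleOn_symSquare_and_altSquare_iff (ρ : Representation ℂ G V)
    (hV : 2 ≤ finrank ℂ V) :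
    (ρ.tprod ρ).IsIrreducibleOn (symSquare V) ∧ (ρ.tprod ρ).IsIrreducibleOn (altSquare V) ↔
      finrank ℂ (ρ.tprod ρ).commutant = 2 := by
  have hsum := finrank_symSquare_add_finrank_altSquare (V := V)
  have hdiff := finrank_symSquare_eq_finrank_altSquare_add (V := V)
  have hV2 : 2 * finrank ℂ V ≤ finrank ℂ V * finrank ℂ V := Nat.mul_le_mul_right _ hV
  have hsym0 : finrank ℂ (symSquare V) ≠ 0 := by omega
  have halt0 : finrank ℂ (altSquare V) ≠ 0 := by omega
  exact isIrreducibleOn_and_isIrreducibleOn_iff_finrank_commutant_eq_two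
    (isInvariant_symSquare ρ) (isInvariant_altSquare ρ) isCompl_symSquare_altSquare
    (Submodule.finrank_eq_zero.not.1 hsym0) (Submodule.finrank_eq_zero.not.1 halt0) (by omega)

lemma finrank_commutant_tprod_eq_finrank_commutant_linHom (ρ : Representation ℂ G V) :
    finrank ℂ (ρ.tprod ρ).commutant = finrank ℂ (ρ.linHom ρ).commutant := by
  have := Fintype.ofFinite G
  have : Invertible (Nat.card G : ℂ) := invertibleOfNonzero (Nat.cast_ne_zero.2 Nat.card_pos.ne')
  apply Nat.cast_injective (R := ℂ)
  rw [← card_inv_mul_sum_char_eq_finrank, ← card_inv_mul_sum_char_eq_finrank]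
  congr 1
  refine Finset.sum_congr rfl fun g _ => ?_
  simp only [char_linHom, char_tensor, Pi.mul_apply, inv_inv]
  ring

end FiniteDimensional

end Representation

theorem adIrreducible_iff_symSquare_irreducible_and_altSquare_irreducible_general
    {G : Type*} [Group G] [Finite G] {V : Type*} [AddCommGroup V] [Module ℂ V]
    [FiniteDimensional ℂ V] (hdim : 2 ≤ Module.finrank ℂ V)
    (ρ : Representation ℂ G V) :
    ρ.AdIrreducible ↔
      (ρ.tprod ρ).IsIrreducibleOn (symSquare V) ∧
      (ρ.tprod ρ).IsIrreducibleOn (altSquare V) := by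
  rw [ρ.adIrreducible_iff_finrank_commutant_eq_two hdim,
    ρ.isIrreducibleOn_symSquare_and_altSquare_iff hdim,
    ρ.finrank_commutant_tprod_eq_finrank_commutant_linHom]

/-- Let `G` be a finite group and `ρ` an irreducible finite-dimensional
complex representation of `G` (of dimension at least 2). Then `Ad ρ` is irreducible iff
both the symmetric square `Sym² ρ` and the alternating square `Λ² ρ` are irreducible. -/
theorem adIrreducible_iff_symSquare_irreducible_and_altSquare_irreducible
    {G : Type*} [Group G] [Finite G] {V : Type*} [AddCommGroup V] [Module ℂ V]
    [FiniteDimensional ℂ V] (hdim : 2 ≤ Module.finrank ℂ V)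
    (ρ : Representation ℂ G V) (hirr : ρ.IsIrreducible') :
    ρ.AdIrreducible ↔
      (ρ.tprod ρ).IsIrreducibleOn (symSquare V) ∧
      (ρ.tprod ρ).IsIrreducibleOn (altSquare V) :=
  adIrreducible_iff_symSquare_irreducible_and_altSquare_irreducible_general hdim ρ
end

section
/- Let G be a finite group and (ρ, V) an irreducible complex representation of dimension n ≥ 3. If ρ is essentially self-dual, i.e., ρ^∨ ≅ ρ ⊗ χ for some one-dimensional character χ of G, then Ad(ρ) is reducible. -/
open Module LinearMap

variable {G : Type*} [Group G] {V : Type*} [AddCommGroup V] [Module ℂ V]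

/-! If `ρ^∨ ≅ ρ ⊗ χ`, the isomorphism `e : V ≃ Vᵛ` is a nondegenerate bilinear form with
`e (ρ g x) (ρ g y) = χ(g)⁻¹ e x y`. By Schur's lemma `e` is symmetric or alternating, i.e.
`e y x = c e x y` with `c = ±1`, so taking the `e`-adjoint is a `G`-equivariant involution `θ` of
`End V` fixing the identity. Its `-1`-eigenspace is a subrepresentation of `Ad ρ`. For `a ≠ 0` and
`b ∉ ℂ a` with `e a b = 0` (which exists once `dim V ≥ 3`), the maps
`(e a) ⊗ b ± c (e b) ⊗ a` are nonzero trace-zero eigenvectors of `θ` with eigenvalues `±1`, so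
that eigenspace is neither zero nor all of `sl(V)`. -/

namespace Representation

lemma IsIrreducible'.exists_eq_smul_id [FiniteDimensional ℂ V] {ρ : Representation ℂ G V}
    (hρ : ρ.IsIrreducible') {f : End ℂ V} (hf : ∀ g v, f (ρ g v) = ρ g (f v)) :
    ∃ c : ℂ, f = c • LinearMap.id := by
  have := hρ.1
  obtain ⟨c, hc⟩ := f.exists_eigenvalue
  have hinv : ρ.IsInvariant (f.eigenspace c) := by
    intro g v hv
    rw [End.mem_eigenspace_iff] at hv ⊢
    rw [hf, hv, map_smul]
  rcases hρ.2 _ hinv with hbot | htop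
  · exact absurd hbot (End.hasEigenvalue_iff.mp hc)
  · refine ⟨c, LinearMap.ext fun v => ?_⟩
    exact End.mem_eigenspace_iff.mp (htop ▸ Submodule.mem_top)

end Representation

section LinearAlgebra

variable {K M : Type*} [Field K] [AddCommGroup M] [Module K M]

lemma Module.Dual.exists_mem_ker_notMem_span_singleton [FiniteDimensional K M]
    (φ : Dual K M) (hM : 3 ≤ finrank K M) (a : M) : ∃ b, φ b = 0 ∧ b ∉ K ∙ a := by
  suffices ¬ LinearMap.ker φ ≤ K ∙ a by simpa [SetLike.not_le_iff_exists] using this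
  intro hle
  have hrange : finrank K (LinearMap.range φ) ≤ 1 :=
    (Submodule.finrank_le _).trans_eq (finrank_self K)
  have hspan : finrank K (K ∙ a) ≤ 1 := by simpa using finrank_span_le_card ({a} : Set M)
  have := LinearMap.finrank_range_add_finrank_ker φ
  have := Submodule.finrank_mono hle
  omega

lemma smulRight_add_smul_smulRight_ne_zero {φ : Dual K M} (hφ : φ ≠ 0) (ψ : Dual K M) {a b : M}
    (hb : b ∉ K ∙ a) (d : K) : φ.smulRight b + d • ψ.smulRight a ≠ 0 := by
  intro h
  obtain ⟨x, hx⟩ : ∃ x, φ x ≠ 0 := by simpa [LinearMap.ext_iff] using hφ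
  have hbx : φ x • b = -(d * ψ x) • a := by
    simpa [smul_smul, eq_neg_iff_add_eq_zero] using LinearMap.congr_fun h x
  apply hb
  rw [← inv_smul_smul₀ hx b, hbx, smul_smul]
  exact Submodule.smul_mem _ _ (Submodule.mem_span_singleton_self a)

namespace LinearEquiv

variable (e : M ≃ₗ[K] Dual K M)

def bilinAdjoint : End K M →ₗ[K] End K M :=
  e.symm.conj.toLinearMap ∘ₗ Dual.transpose

@[simp]
lemma apply_bilinAdjoint_apply (f : End K M) (x y : M) : e (e.bilinAdjoint f x) y = e x (f y) := by
  simp [bilinAdjoint, conj_apply, Dual.transpose_apply]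

lemma bilinAdjoint_ext {f f' : End K M} (h : ∀ x y, e (f x) y = e (f' x) y) : f = f' :=
  LinearMap.ext fun x => e.injective (LinearMap.ext (h x))

lemma trace_bilinAdjoint [FiniteDimensional K M] (f : End K M) :
    LinearMap.trace K M (e.bilinAdjoint f) = LinearMap.trace K M f := by
  simp [bilinAdjoint, LinearMap.trace_conj']

lemma ker_bilinAdjoint_add_id_le_ker_trace [FiniteDimensional K M] [NeZero (2 : K)] :
    LinearMap.ker (e.bilinAdjoint + LinearMap.id) ≤ LinearMap.ker (LinearMap.trace K M) := by
  intro f hf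
  have h : e.bilinAdjoint f = -f := eq_neg_of_add_eq_zero_left hf
  have := e.trace_bilinAdjoint f
  rw [h, map_neg, neg_eq_iff_add_eq_zero, ← two_mul] at this
  exact LinearMap.mem_ker.mpr ((mul_eq_zero.mp this).resolve_left two_ne_zero)

variable {e} {c : K} (hc : ∀ x y, e y x = c * e x y)
include hc

lemma mul_self_eq_one_of_flip [Nontrivial M] : c * c = 1 := by
  obtain ⟨x, hx⟩ := exists_ne (0 : M)
  obtain ⟨y, hy⟩ : ∃ y, e x y ≠ 0 := DFunLike.ne_iff.mp (e.map_ne_zero_iff.mpr hx)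
  have : e x y = c * c * e x y := by rw [mul_assoc, ← hc, ← hc]
  exact (mul_eq_right₀ hy).mp this.symm

lemma bilinAdjoint_smulRight (a b : M) :
    e.bilinAdjoint ((e a).smulRight b) = c • (e b).smulRight a :=
  e.bilinAdjoint_ext fun x y => by simp [hc b x]; ring

lemma bilinAdjoint_smulRight_add (hc2 : c * c = 1) {s : K} (hs : s * s = 1) (a b : M) :
    e.bilinAdjoint ((e a).smulRight b + (s * c) • (e b).smulRight a) =
      s • ((e a).smulRight b + (s * c) • (e b).smulRight a) := by
  rw [map_add, LinearMap.map_smul, bilinAdjoint_smulRight hc, bilinAdjoint_smulRight hc,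
    smul_smul, smul_add, smul_smul, ← mul_assoc, hs, one_mul, mul_assoc, hc2, mul_one, add_comm]

end LinearEquiv

end LinearAlgebra

section EssentiallySelfDual

variable {K M : Type*} [Field K] [AddCommGroup M] [Module K M] {ρ : Representation K G M}
  {χ : G →* Kˣ} {e : M ≃ₗ[K] Dual K M} (he : ∀ g v, e ((χ g : K) • ρ g v) = ρ.dual g (e v))
include he

lemma mul_apply_rep_apply_rep (g : G) (x y : M) : (χ g : K) * e (ρ g x) (ρ g y) = e x y := by
  simpa [Representation.dual_apply, Dual.transpose_apply] using
    LinearMap.congr_fun (he g x) (ρ g y)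

lemma bilinAdjoint_linHom (g : G) (f : End K M) :
    e.bilinAdjoint (ρ.linHom ρ g f) = ρ.linHom ρ g (e.bilinAdjoint f) := by
  refine e.bilinAdjoint_ext fun x y => ?_
  obtain ⟨x, rfl⟩ : ∃ x', x = ρ g x' := ⟨ρ g⁻¹ x, by simp⟩
  obtain ⟨y, rfl⟩ : ∃ y', y = ρ g y' := ⟨ρ g⁻¹ y, by simp⟩
  refine mul_left_cancel₀ (χ g).ne_zero ?_
  simp [mul_apply_rep_apply_rep he]

end EssentiallySelfDual

section Complex

variable {ρ : Representation ℂ G V} {χ : G →* ℂˣ}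
  {e : V ≃ₗ[ℂ] Dual ℂ V} (he : ∀ g v, e ((χ g : ℂ) • ρ g v) = ρ.dual g (e v))
include he

lemma isInvariant_ker_bilinAdjoint_add_id :
    (ρ.linHom ρ).IsInvariant (LinearMap.ker (e.bilinAdjoint + LinearMap.id)) := by
  intro g f hf
  rw [LinearMap.mem_ker] at hf ⊢
  rw [LinearMap.add_apply, LinearMap.id_apply, bilinAdjoint_linHom he, ← map_add]
  simpa using congrArg (ρ.linHom ρ g) hf

lemma exists_flip_eq_mul [FiniteDimensional ℂ V] (hρ : ρ.IsIrreducible') :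
    ∃ c : ℂ, ∀ x y, e y x = c * e x y := by
  set φ : End ℂ V := e.symm.toLinearMap ∘ₗ e.toLinearMap.flip
  have hφ (x y : V) : e (φ x) y = e y x := by simp [φ]
  obtain ⟨c, hc⟩ := hρ.exists_eq_smul_id (f := φ) fun g v =>
    e.injective <| LinearMap.ext fun y => by
      obtain ⟨y, rfl⟩ : ∃ y', y = ρ g y' := ⟨ρ g⁻¹ y, by simp⟩
      refine mul_left_cancel₀ (χ g).ne_zero ?_
      rw [hφ, mul_apply_rep_apply_rep he, mul_apply_rep_apply_rep he, hφ]
  refine ⟨c, fun x y => ?_⟩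
  rw [← hφ, hc, LinearMap.smul_apply, LinearMap.id_apply, map_smul, LinearMap.smul_apply,
    smul_eq_mul]

end Complex

theorem adRep_reducible_of_essentially_self_dual_general
    {G : Type*} [Group G] {V : Type*} [AddCommGroup V] [Module ℂ V]
    [FiniteDimensional ℂ V] (hdim : 3 ≤ Module.finrank ℂ V)
    (ρ : Representation ℂ G V) (hirr : ρ.IsIrreducible')
    (hesd : ∃ (χ : G →* ℂˣ) (e : V ≃ₗ[ℂ] Module.Dual ℂ V),
      ∀ g v, e ((χ g : ℂ) • ρ g v) = ρ.dual g (e v)) :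
    ¬ ρ.AdIrreducible := by
  obtain ⟨χ, e, he⟩ := hesd
  obtain ⟨c, hc⟩ := exists_flip_eq_mul he hirr
  have := hirr.1
  have hc2 : c * c = 1 := LinearEquiv.mul_self_eq_one_of_flip hc
  obtain ⟨a, ha⟩ := exists_ne (0 : V)
  obtain ⟨b, hab, hb⟩ := (e a).exists_mem_ker_notMem_span_singleton hdim a
  set T : ℂ → End ℂ V := fun s => (e a).smulRight b + (s * c) • (e b).smulRight a
  have hT (s : ℂ) : T s ≠ 0 :=
    smulRight_add_smul_smulRight_ne_zero (e.map_ne_zero_iff.mpr ha) (e b) hb _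
  have hT_eigen (s : ℂ) (hs : s * s = 1) : e.bilinAdjoint (T s) = s • T s :=
    LinearEquiv.bilinAdjoint_smulRight_add hc hc2 hs a b
  set U := LinearMap.ker (e.bilinAdjoint + LinearMap.id)
  rintro ⟨-, hirrAd⟩
  rcases hirrAd U e.ker_bilinAdjoint_add_id_le_ker_trace (isInvariant_ker_bilinAdjoint_add_id he)
    with hbot | htop
  · refine hT (-1) ((Submodule.mem_bot ℂ).mp (hbot ▸ ?_))
    simp [U, hT_eigen (-1) (by norm_num)]
  · have hT1 : T 1 ∈ U :=
      htop ▸ LinearMap.mem_ker.mpr (by simp [T, trace_smulRight, hc a b, hab])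
    have : (2 : ℂ) • T 1 = 0 := by
      simpa [U, hT_eigen 1 (one_mul 1), ← two_smul ℂ] using hT1
    exact hT 1 ((smul_eq_zero.mp this).resolve_left two_ne_zero)

/-- Let `G` be a finite group and `ρ` an irreducible complex representation
of dimension `n ≥ 3`. If `ρ` is essentially self-dual, i.e. `ρ^∨ ≅ ρ ⊗ χ` for some
one-dimensional character `χ` of `G`, then `Ad ρ` is reducible. -/
theorem adRep_reducible_of_essentially_self_dual
    {G : Type*} [Group G] [Finite G] {V : Type*} [AddCommGroup V] [Module ℂ V]
    [FiniteDimensional ℂ V] (hdim : 3 ≤ Module.finrank ℂ V)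
    (ρ : Representation ℂ G V) (hirr : ρ.IsIrreducible')
    (hesd : ∃ (χ : G →* ℂˣ) (e : V ≃ₗ[ℂ] Module.Dual ℂ V),
      ∀ g v, e ((χ g : ℂ) • ρ g v) = ρ.dual g (e v)) :
    ¬ ρ.AdIrreducible :=
  adRep_reducible_of_essentially_self_dual_general hdim ρ hirr hesd
end

section
/- Let G be a finite group, H a proper subgroup, and τ a finite-dimensional complex representation of H. If ρ = Ind_H^G(τ) is irreducible, then Ad(ρ) is reducible. Equivalently, if Ad(ρ) is irreducible then ρ is a primitive representation. -/
open Module LinearMap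

variable {G : Type*} [Group G] {V : Type*} [AddCommGroup V] [Module ℂ V]

/-- Irreducibility of a representation. -/
def Representation.IsIrreducibleRep (ρ : Representation ℂ G V) : Prop :=
  Nontrivial V ∧ ∀ U : Submodule ℂ V, ρ.IsInvariant U → U = ⊥ ∨ U = ⊤

section Induction

variable {G : Type*} [Group G] {W : Type*} [AddCommGroup W] [Module ℂ W]

/-- The right-regular action of `G` on `W`-valued functions on `G`. -/
def rightRegular (G : Type*) [Group G] (W : Type*) [AddCommGroup W] [Module ℂ W] :
    Representation ℂ G (G → W) where
  toFun g := LinearMap.funLeft ℂ W (fun x => x * g)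
  map_one' := by ext f x; simp [LinearMap.funLeft]
  map_mul' g₁ g₂ := by ext f x; simp [LinearMap.funLeft, mul_assoc]

/-- The space of the representation of `G` induced from a representation `τ` of a
subgroup `H`: functions `f : G → W` with `f (h * g) = τ h (f g)`. -/
def indSubmodule (H : Subgroup G) (τ : Representation ℂ H W) : Submodule ℂ (G → W) where
  carrier := {f | ∀ (h : H) (g : G), f (↑h * g) = τ h (f g)}
  add_mem' := by intro a b ha hb h g; simp [ha h g, hb h g]
  zero_mem' := by intro h g; simp
  smul_mem' := by intro c f hf h g; simp [hf h g]

lemma indSubmodule_invariant (H : Subgroup G) (τ : Representation ℂ H W) :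
    (rightRegular G W).IsInvariant (indSubmodule H τ) := by
  intro g₀ f hf h g
  have h1 := hf h (g * g₀)
  simpa [rightRegular, LinearMap.funLeft, mul_assoc] using h1

/-- The representation of `G` induced from a representation `τ` of a subgroup `H`. -/
def indRep (H : Subgroup G) (τ : Representation ℂ H W) :
    Representation ℂ G (indSubmodule H τ) :=
  (rightRegular G W).subRep _ (indSubmodule_invariant H τ)

end Induction

/-!
The projections `P g` of the induced space onto the functions supported on the right coset `H g`
are permuted by conjugation, `ρ g₀ ∘ P g ∘ ρ g₀⁻¹ = P (g g₀⁻¹)`, so their span `S` is a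
subrepresentation of `End ρ` and `S ∩ sl(ρ)` is a subrepresentation of `Ad ρ`. It is nonzero,
since it contains `P 1 - P g` for `g ∉ H`. It is not all of `sl(ρ)`, since every element of `S`
commutes with `P 1`, while the trace-zero endomorphism `P g ∘ ρ g⁻¹ ∘ P 1`, which maps the
functions supported on `H` to those supported on `H g`, does not.
-/

namespace Representation

lemma IsInvariant.inf_s4 {ρ : Representation ℂ G V} {U₁ U₂ : Submodule ℂ V}
    (h₁ : ρ.IsInvariant U₁) (h₂ : ρ.IsInvariant U₂) : ρ.IsInvariant (U₁ ⊓ U₂) :=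
  fun g _ hv => ⟨h₁ g _ hv.1, h₂ g _ hv.2⟩

lemma isInvariant_span (ρ : Representation ℂ G V) {S : Set V} (hS : ∀ g, ∀ s ∈ S, ρ g s ∈ S) :
    ρ.IsInvariant (Submodule.span ℂ S) := by
  intro g v hv
  have hle : Submodule.map (ρ g) (Submodule.span ℂ S) ≤ Submodule.span ℂ S := by
    rw [Submodule.map_span]
    exact Submodule.span_le.2 fun _ ⟨s, hs, hgs⟩ => hgs ▸ Submodule.subset_span (hS g s hs)
  exact hle ⟨v, hv, rfl⟩

lemma trace_linHom_self {k M : Type*} [CommSemiring k] [AddCommMonoid M] [Module k M]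
    (ρ : Representation k G M) (g : G) (A : M →ₗ[k] M) :
    trace k M (ρ.linHom ρ g A) = trace k M A := by
  rw [linHom_apply, ← Module.End.mul_eq_comp, ← Module.End.mul_eq_comp, trace_mul_comm,
    mul_assoc, ← map_mul, inv_mul_cancel, map_one, mul_one]

lemma isInvariant_ker_trace (ρ : Representation ℂ G V) :
    (ρ.linHom ρ).IsInvariant (ker (trace ℂ V)) := by
  intro g A hA
  rw [mem_ker, trace_linHom_self]
  exact hA

end Representation

lemma nontrivial_of_ker_trace_ne_bot {R M : Type*} [CommSemiring R] [AddCommMonoid M] [Module R M]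
    (h : ker (trace R M) ≠ ⊥) : Nontrivial M := by
  by_contra hV
  rw [not_nontrivial_iff_subsingleton] at hV
  exact h (Subsingleton.elim _ _)

section CosetProjection

variable {W : Type*} [AddCommGroup W] [Module ℂ W] (H : Subgroup G) (τ : Representation ℂ H W)

lemma indRep_apply_apply (g : G) (f : indSubmodule H τ) (x : G) :
    (indRep H τ g f : G → W) x = (f : G → W) (x * g) := rfl

lemma exists_indSubmodule_apply_one_ne_zero [Nontrivial (indSubmodule H τ)] :
    ∃ f : indSubmodule H τ, (f : G → W) 1 ≠ 0 := by
  obtain ⟨f, hf⟩ := exists_ne (0 : indSubmodule H τ)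
  obtain ⟨x, hx⟩ : ∃ x, (f : G → W) x ≠ 0 := by
    by_contra! h
    exact hf (Subtype.ext (funext h))
  exact ⟨indRep H τ x f, by rwa [indRep_apply_apply, one_mul]⟩

open Classical in
noncomputable def cosetIndicator (g : G) : (G → W) →ₗ[ℂ] (G → W) where
  toFun f x := if x * g⁻¹ ∈ H then f x else 0
  map_add' f₁ f₂ := by ext x; by_cases hx : x * g⁻¹ ∈ H <;> simp [hx]
  map_smul' c f := by ext x; by_cases hx : x * g⁻¹ ∈ H <;> simp [hx]

lemma cosetIndicator_mem_indSubmodule (g : G) {f : G → W} (hf : f ∈ indSubmodule H τ) :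
    cosetIndicator H g f ∈ indSubmodule H τ := by
  intro h x
  have hcoset : (↑h * x) * g⁻¹ ∈ H ↔ x * g⁻¹ ∈ H := by
    rw [mul_assoc]
    exact H.mul_mem_cancel_left h.2
  by_cases hx : x * g⁻¹ ∈ H
  · simp [cosetIndicator, hx, hcoset.2 hx, hf h x]
  · simp [cosetIndicator, hx, mt hcoset.1 hx]

noncomputable def cosetProj (g : G) : indSubmodule H τ →ₗ[ℂ] indSubmodule H τ :=
  (cosetIndicator H g).restrict fun _ hf => cosetIndicator_mem_indSubmodule H τ g hf

open Classical in
lemma cosetProj_apply (g : G) (f : indSubmodule H τ) (x : G) :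
    (cosetProj H τ g f : G → W) x = if x * g⁻¹ ∈ H then (f : G → W) x else 0 := rfl

variable {H τ}

lemma cosetProj_apply_of_mem {g x : G} (hx : x * g⁻¹ ∈ H) (f : indSubmodule H τ) :
    (cosetProj H τ g f : G → W) x = (f : G → W) x := if_pos hx

lemma cosetProj_apply_of_not_mem {g x : G} (hx : x * g⁻¹ ∉ H) (f : indSubmodule H τ) :
    (cosetProj H τ g f : G → W) x = 0 := if_neg hx

lemma cosetProj_mul_self (g : G) : cosetProj H τ g * cosetProj H τ g = cosetProj H τ g := by
  ext f x
  simp only [Module.End.mul_apply, cosetProj_apply]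
  split_ifs <;> rfl

lemma commute_cosetProj (g g' : G) : Commute (cosetProj H τ g) (cosetProj H τ g') := by
  ext f x
  simp only [Module.End.mul_apply, cosetProj_apply]
  split_ifs <;> rfl

lemma cosetProj_mul_cosetProj_of_not_mem {g g' : G} (h : g * g'⁻¹ ∉ H) :
    cosetProj H τ g * cosetProj H τ g' = 0 := by
  ext f x
  simp only [Module.End.mul_apply, cosetProj_apply]
  split_ifs with h₁ h₂
  · refine absurd ?_ h
    simpa [mul_assoc] using H.mul_mem (H.inv_mem h₁) h₂
  all_goals rfl

lemma linHom_cosetProj (g₀ g : G) :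
    (indRep H τ).linHom (indRep H τ) g₀ (cosetProj H τ g) = cosetProj H τ (g * g₀⁻¹) := by
  classical
  ext f x
  have hcoset : x * (g * g₀⁻¹)⁻¹ = x * g₀ * g⁻¹ := by group
  simp only [Representation.linHom_apply, comp_apply, indRep_apply_apply, cosetProj_apply,
    mul_inv_cancel_right, hcoset]

lemma cosetProj_one_ne [Nontrivial (indSubmodule H τ)] {g : G} (hg : g ∉ H) :
    cosetProj H τ 1 ≠ cosetProj H τ g := by
  obtain ⟨f, hf⟩ := exists_indSubmodule_apply_one_ne_zero H τ
  intro heq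
  apply hf
  have hg' : (1 : G) * g⁻¹ ∉ H := by simpa using hg
  rw [← cosetProj_apply_of_mem (g := 1) (x := 1) (by simp) f, heq, cosetProj_apply_of_not_mem hg']

variable (H τ) in
noncomputable def cosetSpan : Submodule ℂ (indSubmodule H τ →ₗ[ℂ] indSubmodule H τ) :=
  Submodule.span ℂ (Set.range (cosetProj H τ))

variable (H τ) in
lemma cosetProj_mem_cosetSpan (g : G) : cosetProj H τ g ∈ cosetSpan H τ :=
  Submodule.subset_span (Set.mem_range_self g)

lemma isInvariant_cosetSpan :
    ((indRep H τ).linHom (indRep H τ)).IsInvariant (V := indSubmodule H τ →ₗ[ℂ] indSubmodule H τ)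
      (cosetSpan H τ) :=
  Representation.isInvariant_span _ fun g₀ _ ⟨g, hg⟩ =>
    ⟨g * g₀⁻¹, hg ▸ (linHom_cosetProj g₀ g).symm⟩

lemma commute_cosetProj_of_mem_cosetSpan {A : indSubmodule H τ →ₗ[ℂ] indSubmodule H τ}
    (hA : A ∈ cosetSpan H τ) (g : G) : Commute A (cosetProj H τ g) := by
  have hle : cosetSpan H τ ≤ (Subalgebra.centralizer ℂ {cosetProj H τ g}).toSubmodule :=
    Submodule.span_le.2 fun _ ⟨g', hg'⟩ => by
      rw [SetLike.mem_coe, Subalgebra.mem_toSubmodule, Subalgebra.mem_centralizer_iff]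
      rintro _ rfl
      exact hg' ▸ commute_cosetProj g g'
  exact (Subalgebra.mem_centralizer_iff ℂ).1 (hle hA) _ rfl |>.symm

lemma cosetProj_one_sub_mem_cosetSpan_inf_ker_trace (g : G) :
    cosetProj H τ 1 - cosetProj H τ g ∈ cosetSpan H τ ⊓ ker (trace ℂ (indSubmodule H τ)) := by
  have hconj : cosetProj H τ g = (indRep H τ).linHom (indRep H τ) g⁻¹ (cosetProj H τ 1) := by
    rw [linHom_cosetProj, one_mul, inv_inv]
  refine Submodule.mem_inf.2 ⟨Submodule.sub_mem (M := indSubmodule H τ →ₗ[ℂ] indSubmodule H τ) _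
    (cosetProj_mem_cosetSpan H τ 1) (cosetProj_mem_cosetSpan H τ g), ?_⟩
  rw [mem_ker, map_sub (trace ℂ (indSubmodule H τ)), hconj, Representation.trace_linHom_self,
    sub_self]

lemma exists_mem_ker_trace_not_mem_cosetSpan [Nontrivial (indSubmodule H τ)] {g : G}
    (hg : g ∉ H) : ∃ T ∈ ker (trace ℂ (indSubmodule H τ)), T ∉ cosetSpan H τ := by
  set T := cosetProj H τ g * indRep H τ g⁻¹ * cosetProj H τ 1
  have hdisj : cosetProj H τ 1 * cosetProj H τ g = 0 :=
    cosetProj_mul_cosetProj_of_not_mem (by simpa using hg)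
  refine ⟨T, ?_, fun hT => ?_⟩
  · rw [mem_ker, trace_mul_comm, ← mul_assoc, hdisj, zero_mul, map_zero]
  have hT0 : T = 0 := calc
    T = T * cosetProj H τ 1 := by rw [mul_assoc, cosetProj_mul_self]
    _ = cosetProj H τ 1 * T := commute_cosetProj_of_mem_cosetSpan hT 1
    _ = 0 := by rw [← mul_assoc, ← mul_assoc, hdisj, zero_mul, zero_mul]
  obtain ⟨f, hf⟩ := exists_indSubmodule_apply_one_ne_zero H τ
  apply hf
  have hTf : (T f : G → W) g = (f : G → W) 1 := by
    simp only [T, Module.End.mul_apply, cosetProj_apply, indRep_apply_apply, mul_inv_cancel,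
      H.one_mem, if_true]
  rw [← hTf, hT0]
  rfl

end CosetProjection

theorem adRep_of_induced_reducible_general
    {G : Type*} [Group G] {W : Type*} [AddCommGroup W] [Module ℂ W]
    (H : Subgroup G) (hH : H ≠ ⊤)
    (τ : Representation ℂ H W) :
    ¬ (indRep H τ).AdIrreducible := by
  rintro ⟨hne, hmin⟩
  have := nontrivial_of_ker_trace_ne_bot hne
  obtain ⟨g, hg⟩ : ∃ g, g ∉ H := by simpa [Subgroup.eq_top_iff'] using hH
  have hinv := isInvariant_cosetSpan.inf_s4 (Representation.isInvariant_ker_trace (indRep H τ))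
  rcases hmin _ inf_le_right hinv with hbot | htop
  · have hmem := cosetProj_one_sub_mem_cosetSpan_inf_ker_trace (τ := τ) g
    rw [hbot, Submodule.mem_bot] at hmem
    exact cosetProj_one_ne (τ := τ) hg (sub_eq_zero.1 hmem)
  · obtain ⟨T, hT, hTS⟩ := exists_mem_ker_trace_not_mem_cosetSpan (τ := τ) hg
    exact hTS (htop ▸ hT).1

/-- Let `G` be a finite group, `H` a proper subgroup and `τ` a
finite-dimensional complex representation of `H`. If the induced representation
`ρ = Ind_H^G τ` is irreducible, then `Ad ρ` is reducible. (Equivalently: a representation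
with irreducible adjoint is primitive, i.e. not induced from any proper subgroup.) -/
theorem adRep_of_induced_reducible
    {G : Type*} [Group G] [Finite G] {W : Type*} [AddCommGroup W] [Module ℂ W]
    [FiniteDimensional ℂ W] (H : Subgroup G) (hH : H ≠ ⊤)
    (τ : Representation ℂ H W) (hirr : (indRep H τ).IsIrreducibleRep) :
    ¬ (indRep H τ).AdIrreducible :=
  adRep_of_induced_reducible_general H hH τ
end

section
/- Let G be a finite group and ρ : G → GL₂(ℂ) an irreducible 2-dimensional complex representation whose projective image in PGL₂(ℂ) is isomorphic to A₄. Then Ad(ρ) is irreducible. -/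
open Matrix

section MatDefs

variable {G : Type*} [Group G] {n : ℕ}

/-- Irreducibility of a matrix representation `ρ : G →* GLₙ(ℂ)`. -/
def MatIrreducible (ρ : G →* GL (Fin n) ℂ) : Prop :=
  ∀ U : Submodule ℂ (Fin n → ℂ),
    (∀ g : G, ∀ v ∈ U, (ρ g : Matrix (Fin n) (Fin n) ℂ).mulVec v ∈ U) → U = ⊥ ∨ U = ⊤

/-- Irreducibility of the adjoint `Ad ρ` of a matrix representation: the conjugation action
of `G` on the space of trace-zero `n × n` matrices is irreducible. -/
def MatAdIrreducible (ρ : G →* GL (Fin n) ℂ) : Prop :=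
  LinearMap.ker (Matrix.traceLinearMap (Fin n) ℂ ℂ) ≠ ⊥ ∧
  ∀ U ≤ LinearMap.ker (Matrix.traceLinearMap (Fin n) ℂ ℂ),
    (∀ g : G, ∀ M ∈ U,
      (ρ g : Matrix (Fin n) (Fin n) ℂ) * M * ((ρ g)⁻¹ : GL (Fin n) ℂ) ∈ U) →
    U = ⊥ ∨ U = LinearMap.ker (Matrix.traceLinearMap (Fin n) ℂ ℂ)

/-- The image of a matrix representation in `PGLₙ(ℂ)`. -/
def projImage (ρ : G →* GL (Fin n) ℂ) : Subgroup (GL (Fin n) ℂ ⧸ Subgroup.center (GL (Fin n) ℂ)) :=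
  ((QuotientGroup.mk' (Subgroup.center (GL (Fin n) ℂ))).comp ρ).range

end MatDefs

/-!
A proper nonzero conjugation-invariant subspace of `sl₂(ℂ)` produces an invariant line `ℂ • M`:
either the subspace is itself a line, or it is a plane `U` and the orthogonal of `U ⊕ ℂ • 1` for
the nondegenerate, conjugation-invariant trace form `(A, B) ↦ tr (A * B)` is one.
Then `ρ g * M * (ρ g)⁻¹ = c_g • M` for all `g`, and `M * M = -det M • 1` since `tr M = 0`.
If `det M = 0`, then `ker M` is a `ρ`-stable line in `ℂ²`, contradicting irreducibility.
Otherwise `c_g ^ 2 = 1`, so every `ρ g ^ 2` commutes with the non-scalar matrix `M`, whose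
centralizer `ℂ[M]` is commutative: all squares in the projective image would commute, which fails
in `A₄` (there the squares of the 3-cycles are the 3-cycles).
-/

namespace Matrix

variable {K : Type*} [Field K] {n : Type*} [Fintype n]

noncomputable def traceMulForm : LinearMap.BilinForm K (Matrix n n K) :=
  (LinearMap.mul K (Matrix n n K)).compr₂ (traceLinearMap n K K)

@[simp]
lemma traceMulForm_apply (A B : Matrix n n K) : traceMulForm A B = (A * B).trace := rfl

lemma traceMulForm_nondegenerate :
    (traceMulForm : LinearMap.BilinForm K (Matrix n n K)).Nondegenerate :=
  ⟨fun A hA => ext_iff_trace_mul_right.2 fun X => by simpa using hA X,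
   fun B hB => ext_iff_trace_mul_left.2 fun X => by simpa using hB X⟩

lemma finrank_ker_traceLinearMap [Nonempty n] :
    Module.finrank K (LinearMap.ker (traceLinearMap n K K)) = Fintype.card n ^ 2 - 1 := by
  have h := LinearMap.finrank_range_add_finrank_ker (traceLinearMap n K K)
  rw [LinearMap.range_eq_top.2 trace_surjective, finrank_top, Module.finrank_self,
    Module.finrank_matrix, Module.finrank_self] at h
  lia

variable [DecidableEq n]

lemma traceMulForm_orthogonal_le_ker_traceLinearMap {N : Submodule K (Matrix n n K)}
    (h1 : (1 : Matrix n n K) ∈ N) :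
    traceMulForm.orthogonal N ≤ LinearMap.ker (traceLinearMap n K K) :=
  fun A hA => by simpa using hA 1 h1

lemma finrank_traceMulForm_orthogonal_sup_span_one [CharZero K] [Nonempty n]
    {U : Submodule K (Matrix n n K)} (hU : U ≤ LinearMap.ker (traceLinearMap n K K)) :
    Module.finrank K (traceMulForm.orthogonal (U ⊔ K ∙ (1 : Matrix n n K))) =
      Fintype.card n ^ 2 - 1 - Module.finrank K U := by
  have h1 : (1 : Matrix n n K) ∉ U := fun h => by simpa using hU h
  have hdisj := (Submodule.disjoint_span_singleton' one_ne_zero).2 h1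
  have hsup := Submodule.finrank_sup_add_finrank_inf_eq U (K ∙ (1 : Matrix n n K))
  rw [hdisj.eq_bot, finrank_bot, add_zero, finrank_span_singleton one_ne_zero] at hsup
  rw [LinearMap.BilinForm.finrank_orthogonal traceMulForm_nondegenerate, hsup,
    Module.finrank_matrix, Module.finrank_self]
  lia

lemma ne_scalar_of_trace_eq_zero [CharZero K] [Nonempty n] {M : Matrix n n K} (hM : M ≠ 0)
    (h : M.trace = 0) (a : K) : M ≠ scalar n a := by
  rintro rfl
  obtain rfl : a = 0 := by simpa using h
  exact hM (map_zero _)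

end Matrix

section ConjInvariant

variable {K : Type*} [Field K] {n : Type*} [Fintype n] [DecidableEq n] {G : Type*} [Group G]
  {ρ : G →* GL n K}

variable (ρ) in
def IsConjInvariant (U : Submodule K (Matrix n n K)) : Prop :=
  ∀ g : G, ∀ M ∈ U, (ρ g : Matrix n n K) * M * ((ρ g)⁻¹ : GL n K) ∈ U

lemma IsConjInvariant.inv_conj_mem {U : Submodule K (Matrix n n K)} (hU : IsConjInvariant ρ U)
    (g : G) {M : Matrix n n K} (hM : M ∈ U) :
    (((ρ g)⁻¹ : GL n K) : Matrix n n K) * M * (ρ g : Matrix n n K) ∈ U := by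
  simpa using hU g⁻¹ M hM

lemma IsConjInvariant.sup {U V : Submodule K (Matrix n n K)} (hU : IsConjInvariant ρ U)
    (hV : IsConjInvariant ρ V) : IsConjInvariant ρ (U ⊔ V) := by
  intro g M hM
  obtain ⟨A, hA, B, hB, rfl⟩ := Submodule.mem_sup.1 hM
  rw [mul_add, add_mul]
  exact Submodule.add_mem_sup (hU g A hA) (hV g B hB)

lemma isConjInvariant_span_one : IsConjInvariant ρ (K ∙ (1 : Matrix n n K)) := by
  intro g M hM
  obtain ⟨c, rfl⟩ := Submodule.mem_span_singleton.1 hM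
  rw [mul_smul_comm, mul_one, smul_mul_assoc, Units.mul_inv]
  exact hM

lemma IsConjInvariant.orthogonal {U : Submodule K (Matrix n n K)} (hU : IsConjInvariant ρ U) :
    IsConjInvariant ρ (Matrix.traceMulForm.orthogonal U) := by
  intro g M hM X hX
  have := hM _ (hU.inv_conj_mem g hX)
  simp only [Matrix.traceMulForm_apply] at this ⊢
  rw [← this, ← Matrix.mul_assoc, Matrix.trace_mul_comm]
  simp only [Matrix.mul_assoc]

lemma IsConjInvariant.exists_conj_eq_smul {L : Submodule K (Matrix n n K)}
    (hL : IsConjInvariant ρ L) (h1 : Module.finrank K L = 1) :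
    ∃ M ∈ L, M ≠ 0 ∧
      ∀ g, ∃ c : K, (ρ g : Matrix n n K) * M * ((ρ g)⁻¹ : GL n K) = c • M := by
  obtain ⟨⟨M, hM⟩, hM0, hspan⟩ := finrank_eq_one_iff'.1 h1
  refine ⟨M, hM, fun h => hM0 (Subtype.ext h), fun g => ?_⟩
  obtain ⟨c, hc⟩ := hspan ⟨_, hL g M hM⟩
  exact ⟨c, (congrArg Subtype.val hc).symm⟩

end ConjInvariant

lemma exists_isConjInvariant_finrank_eq_one {K : Type*} [Field K] [CharZero K] {G : Type*}
    [Group G] {ρ : G →* GL (Fin 2) K} {U : Submodule K (Matrix (Fin 2) (Fin 2) K)}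
    (hU : U ≤ LinearMap.ker (traceLinearMap (Fin 2) K K)) (hinv : IsConjInvariant ρ U)
    (hbot : U ≠ ⊥) (htop : U ≠ LinearMap.ker (traceLinearMap (Fin 2) K K)) :
    ∃ L ≤ LinearMap.ker (traceLinearMap (Fin 2) K K), IsConjInvariant ρ L ∧
      Module.finrank K L = 1 := by
  have hpos : 1 ≤ Module.finrank K U := Submodule.one_le_finrank_iff.2 hbot
  have hlt : Module.finrank K U < 3 := by
    simpa [finrank_ker_traceLinearMap] using
      Submodule.finrank_lt_finrank_of_lt (lt_of_le_of_ne hU htop)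
  interval_cases hU1 : Module.finrank K U
  · exact ⟨U, hU, hinv, hU1⟩
  · refine ⟨traceMulForm.orthogonal (U ⊔ K ∙ 1),
      traceMulForm_orthogonal_le_ker_traceLinearMap ?_,
      (hinv.sup isConjInvariant_span_one).orthogonal, ?_⟩
    · exact Submodule.mem_sup_right (Submodule.mem_span_singleton_self 1)
    · simp [finrank_traceMulForm_orthogonal_sup_span_one hU, hU1]

namespace Matrix

lemma mul_self_eq_neg_det_smul_one_of_trace_eq_zero {R : Type*} [CommRing R]
    {M : Matrix (Fin 2) (Fin 2) R} (h : M.trace = 0) :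
    M * M = -M.det • (1 : Matrix (Fin 2) (Fin 2) R) := by
  rw [trace_fin_two] at h
  ext i j
  fin_cases i <;> fin_cases j <;> simp [mul_apply, det_fin_two]
  · linear_combination M 0 0 * h
  · linear_combination M 0 1 * h
  · linear_combination M 1 0 * h
  · linear_combination M 1 1 * h

variable {K : Type*} [Field K]

lemma exists_entries_eq_mul_of_commute {A M : Matrix (Fin 2) (Fin 2) K}
    (hM : ∀ a, M ≠ scalar (Fin 2) a) (h : Commute A M) :
    ∃ β : K, A 0 1 = β * M 0 1 ∧ A 1 0 = β * M 1 0 ∧ A 0 0 - A 1 1 = β * (M 0 0 - M 1 1) := by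
  have e00 := congrFun (congrFun h.eq 0) 0
  have e01 := congrFun (congrFun h.eq 0) 1
  have e10 := congrFun (congrFun h.eq 1) 0
  simp only [mul_apply, Fin.sum_univ_two] at e00 e01 e10
  by_cases hb : M 0 1 = 0
  · by_cases hc : M 1 0 = 0
    · have hd : M 0 0 - M 1 1 ≠ 0 := fun h0 => hM (M 0 0) <| by
        ext i j
        fin_cases i <;> fin_cases j <;> simp [hb, hc]
        linear_combination -h0
      refine ⟨(A 0 0 - A 1 1) / (M 0 0 - M 1 1), ?_, ?_, by field_simp⟩ <;> field_simp
      · linear_combination -e01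
      · linear_combination e10
    · refine ⟨A 1 0 / M 1 0, ?_, by field_simp, ?_⟩ <;> field_simp
      · linear_combination e00
      · linear_combination -e10
  · refine ⟨A 0 1 / M 0 1, by field_simp, ?_, ?_⟩ <;> field_simp
    · linear_combination -e00
    · linear_combination e01

lemma exists_eq_smul_one_add_smul_of_commute {A M : Matrix (Fin 2) (Fin 2) K}
    (hM : ∀ a, M ≠ scalar (Fin 2) a) (h : Commute A M) : ∃ α β : K, A = α • 1 + β • M := by
  obtain ⟨β, h01, h10, hdiag⟩ := exists_entries_eq_mul_of_commute hM h
  refine ⟨A 0 0 - β * M 0 0, β, ?_⟩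
  ext i j
  fin_cases i <;> fin_cases j <;> simp [h01, h10]
  linear_combination -hdiag

lemma commute_of_commute_of_ne_scalar {A B M : Matrix (Fin 2) (Fin 2) K}
    (hM : ∀ a, M ≠ scalar (Fin 2) a) (hA : Commute A M) (hB : Commute B M) : Commute A B := by
  obtain ⟨α, β, rfl⟩ := exists_eq_smul_one_add_smul_of_commute hM hA
  exact (((Commute.one_right B).smul_right α).add_right (hB.smul_right β)).symm

end Matrix

lemma commute_sq_of_conj_eq_smul {K A : Type*} [Field K] [Ring A] [Algebra K A] [Nontrivial A]
    {P : Aˣ} {M : A} {c d : K} (hd : d ≠ 0) (hMM : M * M = d • 1) (hP : ↑P * M * ↑P⁻¹ = c • M) :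
    Commute ((P ^ 2 : Aˣ) : A) M := by
  have hconj_sq : ↑P * (M * M) * ↑P⁻¹ = (c * c) • (M * M) := by
    calc ↑P * (M * M) * ↑P⁻¹ = (↑P * M * ↑P⁻¹) * (↑P * M * ↑P⁻¹) := by
          simp only [mul_assoc, Units.inv_mul_cancel_left]
      _ = (c * c) • (M * M) := by rw [hP, smul_mul_smul_comm]
  have hc : c * c = 1 := by
    rw [hMM, mul_smul_comm, mul_one, smul_mul_assoc, Units.mul_inv, smul_smul] at hconj_sq
    simpa [hd] using smul_left_injective K one_ne_zero hconj_sq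
  refine (Units.mul_inv_eq_iff_eq_mul _).1 ?_
  calc ↑(P ^ 2) * M * ↑(P ^ 2)⁻¹ = ↑P * (↑P * M * ↑P⁻¹) * ↑P⁻¹ := by
        simp [pow_two, mul_assoc]
    _ = M := by rw [hP, mul_smul_comm, smul_mul_assoc, hP, smul_smul, hc, one_smul]

lemma exists_not_commute_sq_alternatingGroup_fin_four :
    ∃ x y : alternatingGroup (Fin 4), ¬ Commute (x ^ 2) (y ^ 2) := by
  unfold Commute SemiconjBy
  decide

section Representation

variable {G : Type*} [Group G] {n : ℕ} {ρ : G →* GL (Fin n) ℂ}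

lemma MatIrreducible.eq_zero_of_mul_self_eq_zero (hirr : MatIrreducible ρ)
    {M : Matrix (Fin n) (Fin n) ℂ} (hMM : M * M = 0)
    (hconj : ∀ g, ∃ c : ℂ,
      (ρ g : Matrix (Fin n) (Fin n) ℂ) * M * ((ρ g)⁻¹ : GL (Fin n) ℂ) = c • M) :
    M = 0 := by
  have hker : ∀ g : G, ∀ v ∈ LinearMap.ker (toLin' M),
      (ρ g : Matrix (Fin n) (Fin n) ℂ) *ᵥ v ∈ LinearMap.ker (toLin' M) := by
    intro g v hv
    obtain ⟨c, hc⟩ := hconj g⁻¹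
    rw [map_inv, inv_inv, mul_assoc, Units.inv_mul_eq_iff_eq_mul] at hc
    rw [LinearMap.mem_ker, toLin'_apply] at hv ⊢
    rw [mulVec_mulVec, hc, mul_smul_comm, smul_mulVec, ← mulVec_mulVec, hv]
    simp
  rw [← toLin'.map_eq_zero_iff]
  rcases hirr _ hker with h | h
  · have hrange : LinearMap.range (toLin' M) ≤ LinearMap.ker (toLin' M) :=
      LinearMap.range_le_ker_iff.2 (by rw [← toLin'_mul, hMM, map_zero])
    exact LinearMap.range_eq_bot.1 (eq_bot_iff.2 (h ▸ hrange))
  · exact LinearMap.ker_eq_top.1 h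

lemma exists_not_commute_sq_of_projImage_A4
    (hA4 : Nonempty (projImage ρ ≃* alternatingGroup (Fin 4))) :
    ∃ g h : G, ¬ Commute (ρ g ^ 2) (ρ h ^ 2) := by
  by_contra! hcomm
  obtain ⟨e⟩ := hA4
  have hproj : ∀ a b : projImage ρ, Commute (a ^ 2) (b ^ 2) := by
    rintro ⟨_, g, rfl⟩ ⟨_, h, rfl⟩
    exact Subtype.ext ((hcomm g h).map (QuotientGroup.mk' _))
  obtain ⟨x, y, hxy⟩ := exists_not_commute_sq_alternatingGroup_fin_four
  exact hxy (by simpa using (hproj (e.symm x) (e.symm y)).map e)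

end Representation

lemma eq_zero_of_trace_eq_zero_of_conj_eq_smul {G : Type*} [Group G] {ρ : G →* GL (Fin 2) ℂ}
    (hirr : MatIrreducible ρ) (hA4 : Nonempty (projImage ρ ≃* alternatingGroup (Fin 4)))
    {M : Matrix (Fin 2) (Fin 2) ℂ} (htr : M.trace = 0)
    (hconj : ∀ g, ∃ c : ℂ,
      (ρ g : Matrix (Fin 2) (Fin 2) ℂ) * M * ((ρ g)⁻¹ : GL (Fin 2) ℂ) = c • M) :
    M = 0 := by
  by_contra hM0
  have hMM := mul_self_eq_neg_det_smul_one_of_trace_eq_zero htr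
  by_cases hdet : M.det = 0
  · exact hM0 (hirr.eq_zero_of_mul_self_eq_zero (by simpa [hdet] using hMM) hconj)
  have hsq : ∀ g, Commute ((ρ g ^ 2 : GL (Fin 2) ℂ) : Matrix (Fin 2) (Fin 2) ℂ) M := fun g =>
    (hconj g).elim fun _ hc => commute_sq_of_conj_eq_smul (neg_ne_zero.2 hdet) hMM hc
  obtain ⟨g, h, hgh⟩ := exists_not_commute_sq_of_projImage_A4 hA4
  exact hgh (Commute.units_val_iff.1
    (commute_of_commute_of_ne_scalar (ne_scalar_of_trace_eq_zero hM0 htr) (hsq g) (hsq h)))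

theorem matAdIrreducible_of_projImage_A4_general
    {G : Type*} [Group G] (ρ : G →* GL (Fin 2) ℂ)
    (hirr : MatIrreducible ρ)
    (hA4 : Nonempty (projImage ρ ≃* alternatingGroup (Fin 4))) :
    MatAdIrreducible ρ := by
  refine ⟨Submodule.one_le_finrank_iff.1 (by simp [finrank_ker_traceLinearMap]),
    fun U hU hinv => ?_⟩
  by_contra! hne
  obtain ⟨L, hLsl, hLinv, hL1⟩ := exists_isConjInvariant_finrank_eq_one hU hinv hne.1 hne.2
  obtain ⟨M, hML, hM0, hconj⟩ := hLinv.exists_conj_eq_smul hL1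
  exact hM0 (eq_zero_of_trace_eq_zero_of_conj_eq_smul hirr hA4 (hLsl hML) hconj)

/-- Let `G` be a finite group and `ρ : G → GL₂(ℂ)` an irreducible
2-dimensional complex representation whose projective image in `PGL₂(ℂ)` is isomorphic
to `A₄`. Then `Ad ρ` is irreducible. -/
theorem matAdIrreducible_of_projImage_A4
    {G : Type*} [Group G] [Finite G] (ρ : G →* GL (Fin 2) ℂ)
    (hirr : MatIrreducible ρ)
    (hA4 : Nonempty (projImage ρ ≃* alternatingGroup (Fin 4))) :
    MatAdIrreducible ρ :=
  matAdIrreducible_of_projImage_A4_general ρ hirr hA4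
end

section
/- Let G be a finite group acting on a finite-dimensional complex vector space U, and let W ≤ G be a normal abelian subgroup such that U decomposes as a direct sum of 1-dimensional weight spaces U_χ over a set Λ of characters χ of W, with G permuting the weight spaces transitively (g·U_χ = U_{gχ} for the induced action of G on characters, transitive on Λ). Then U is an irreducible G-representation. -/
open Module LinearMap

variable {G : Type*} [Group G] {V : Type*} [AddCommGroup V] [Module ℂ V]

section Weights

variable {G : Type*} [Group G] {U : Type*} [AddCommGroup U] [Module ℂ U]

/-- The weight space of a character `χ` of a subgroup `W` in a representation. -/
def weightSpace (ρ : Representation ℂ G U) (W : Subgroup G) (χ : W →* ℂˣ) :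
    Submodule ℂ U where
  carrier := {u | ∀ w : W, ρ (w : G) u = (χ w : ℂ) • u}
  add_mem' := by intro a b ha hb w; simp [map_add, ha w, hb w, smul_add]
  zero_mem' := by intro w; simp
  smul_mem' := by intro c u hu w; rw [map_smul, hu w, smul_comm]

/-- The action of `g ∈ G` on characters of a normal subgroup `W`: `(g·χ)(w) = χ(g⁻¹ w g)`. -/
def conjChar {G : Type*} [Group G] (W : Subgroup G) [hN : W.Normal] (g : G)
    (χ : W →* ℂˣ) : W →* ℂˣ :=
  χ.comp (MulAut.conjNormal (g⁻¹ : G) : MulAut W).toMonoidHom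

end Weights

/-!
Averaging against a character `χ` of the finite group `W` gives a projection onto `U_χ` that
kills every other weight space. An invariant subspace `U' ≠ 0` is stable under these
projections, and a nonzero vector of `U'` has a nonzero component in some `U_χ`, `χ ∈ Λ`; since
`U_χ` is a line, `U_χ ≤ U'`. Transporting by `G`, which is transitive on `Λ`, puts every weight
space in `U'`, so `U' = U`.
-/

theorem Submodule.le_of_finrank_eq_one_of_mem {K V : Type*} [DivisionRing K] [AddCommGroup V]
    [Module K V] {p q : Submodule K V} (hp : finrank K p = 1) {x : V} (hxp : x ∈ p)
    (hx : x ≠ 0) (hxq : x ∈ q) : p ≤ q := by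
  intro y hy
  obtain ⟨c, hc⟩ :=
    (finrank_eq_one_iff_of_nonzero' (⟨x, hxp⟩ : p) (by simpa using hx)).mp hp ⟨y, hy⟩
  rw [← show c • x = y from congrArg Subtype.val hc]
  exact q.smul_mem c hxq

open Classical in
theorem sum_hom_units_val {H K : Type*} [Group H] [Fintype H] [CommRing K] [IsDomain K]
    (ψ : H →* Kˣ) : ∑ h : H, (ψ h : K) = if ψ = 1 then (Fintype.card H : K) else 0 := by
  split_ifs with hψ
  · simp [hψ]
  · refine sum_hom_units_eq_zero ((Units.coeHom K).comp ψ) fun h => hψ ?_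
    exact MonoidHom.ext fun a => Units.ext (DFunLike.congr_fun h a)

section WeightProjection

variable {G : Type*} [Group G] {U : Type*} [AddCommGroup U] [Module ℂ U]
  (ρ : Representation ℂ G U) (W : Subgroup G) [Fintype W]

noncomputable def weightProjection (χ : W →* ℂˣ) : U →ₗ[ℂ] U :=
  (Fintype.card W : ℂ)⁻¹ • ∑ w : W, (χ w⁻¹ : ℂ) • ρ w

variable {ρ W}

theorem weightProjection_apply_of_mem_weightSpace {χ χ' : W →* ℂˣ} {v : U}
    (hv : v ∈ weightSpace ρ W χ') :
    weightProjection ρ W χ v = if χ = χ' then v else 0 := by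
  have hsum : ∑ w : W, (χ w⁻¹ : ℂ) • ρ w v = (∑ w : W, ((χ' * χ⁻¹) w : ℂ)) • v := by
    rw [Finset.sum_smul]
    refine Finset.sum_congr rfl fun w _ => ?_
    rw [hv w, smul_smul, MonoidHom.mul_apply, MonoidHom.inv_apply, map_inv, mul_comm]
    rfl
  have hcard : (Fintype.card W : ℂ) ≠ 0 := Nat.cast_ne_zero.mpr Fintype.card_ne_zero
  simp only [weightProjection, LinearMap.smul_apply, LinearMap.coe_sum, Finset.sum_apply,
    hsum, sum_hom_units_val]
  by_cases h : χ = χ'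
  · subst h
    rw [if_pos (mul_inv_cancel χ), if_pos rfl, smul_smul, inv_mul_cancel₀ hcard, one_smul]
  · rw [if_neg fun h' => h (mul_inv_eq_one.mp h').symm, if_neg h, zero_smul, smul_zero]

theorem weightProjection_finsuppSum {Λ : Set (W →* ℂˣ)} {f : Λ →₀ U}
    (hf : ∀ χ : Λ, f χ ∈ weightSpace ρ W χ) (χ : Λ) :
    weightProjection ρ W χ (f.sum fun _ x => x) = f χ := by
  classical
  rw [Finsupp.sum, map_sum]
  simp only [weightProjection_apply_of_mem_weightSpace (hf _), Subtype.coe_inj]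
  rw [Finset.sum_ite_eq]
  split_ifs with h
  · rfl
  · exact (Finsupp.notMem_support_iff.mp h).symm

theorem exists_weightProjection_ne_zero {Λ : Set (W →* ℂˣ)} {u : U}
    (hu : u ∈ ⨆ χ ∈ Λ, weightSpace ρ W χ) (hu0 : u ≠ 0) :
    ∃ χ ∈ Λ, weightProjection ρ W χ u ∈ weightSpace ρ W χ ∧ weightProjection ρ W χ u ≠ 0 := by
  rw [← iSup_subtype'', Submodule.mem_iSup_iff_exists_finsupp] at hu
  obtain ⟨f, hf, rfl⟩ := hu
  obtain ⟨χ, hχ⟩ : ∃ χ, f χ ≠ 0 := by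
    by_contra! h
    exact hu0 (by rw [show f = 0 from Finsupp.ext h, Finsupp.sum_zero_index])
  refine ⟨χ, χ.2, ?_⟩
  rw [weightProjection_finsuppSum hf]
  exact ⟨hf χ, hχ⟩

theorem Representation.IsInvariant.weightProjection_mem {U' : Submodule ℂ U}
    (hU' : ρ.IsInvariant U') (χ : W →* ℂˣ) {v : U} (hv : v ∈ U') :
    weightProjection ρ W χ v ∈ U' := by
  simp only [weightProjection, LinearMap.smul_apply, LinearMap.coe_sum, Finset.sum_apply]
  exact U'.smul_mem _ (U'.sum_mem fun w _ => U'.smul_mem _ (hU' w v hv))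

end WeightProjection

theorem irreducible_of_transitive_one_dimensional_weight_spaces_general
    {G : Type*} [Group G] [Finite G] {U : Type*} [AddCommGroup U] [Module ℂ U]
    [Nontrivial U]
    (ρ : Representation ℂ G U) (W : Subgroup G) (hN : W.Normal)
    (Λ : Set (W →* ℂˣ))
    (hsum : (⨆ χ ∈ Λ, weightSpace ρ W χ) = ⊤)
    (hdim : ∀ χ ∈ Λ, Module.finrank ℂ (weightSpace ρ W χ) = 1)
    (hperm : ∀ (g : G) (χ : W →* ℂˣ),
      Submodule.map (ρ g) (weightSpace ρ W χ) = weightSpace ρ W (conjChar W g χ))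
    (htrans : ∀ χ ∈ Λ, ∀ χ' ∈ Λ, ∃ g : G, conjChar W g χ = χ') :
    ρ.IsIrreducible' := by
  have : Fintype W := Fintype.ofFinite W
  refine ⟨‹_›, fun U' hU' => or_iff_not_imp_left.2 fun hU'0 => ?_⟩
  obtain ⟨u, huU', hu0⟩ := Submodule.exists_mem_ne_zero_of_ne_bot hU'0
  obtain ⟨χ, hχ, hPu, hPu0⟩ := exists_weightProjection_ne_zero (hsum ▸ Submodule.mem_top) hu0
  have hχU' : weightSpace ρ W χ ≤ U' :=
    Submodule.le_of_finrank_eq_one_of_mem (hdim χ hχ) hPu hPu0 (hU'.weightProjection_mem χ huU')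
  rw [eq_top_iff, ← hsum]
  refine iSup₂_le fun χ' hχ' => ?_
  obtain ⟨g, rfl⟩ := htrans χ hχ χ' hχ'
  rw [← hperm, Submodule.map_le_iff_le_comap]
  exact hχU'.trans fun v hv => hU' g v hv

/-- Let `G` be a finite group acting on a finite-dimensional complex vector
space `U`, and let `W` be a normal abelian subgroup of `G` such that `U` is the direct sum of
the 1-dimensional weight spaces `U_χ` for `χ` in the set `Λ` of characters of `W` with
nonzero weight space, with `G` permuting the weight spaces (`g · U_χ = U_{g·χ}`) transitively
on `Λ`. Then `U` is an irreducible `G`-representation. -/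
theorem irreducible_of_transitive_one_dimensional_weight_spaces
    {G : Type*} [Group G] [Finite G] {U : Type*} [AddCommGroup U] [Module ℂ U]
    [FiniteDimensional ℂ U] [Nontrivial U]
    (ρ : Representation ℂ G U) (W : Subgroup G) (hN : W.Normal)
    (hab : ∀ a b : W, a * b = b * a)
    (Λ : Set (W →* ℂˣ)) (hΛ : Λ = {χ | weightSpace ρ W χ ≠ ⊥})
    (hsum : (⨆ χ ∈ Λ, weightSpace ρ W χ) = ⊤)
    (hdim : ∀ χ ∈ Λ, Module.finrank ℂ (weightSpace ρ W χ) = 1)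
    (hperm : ∀ (g : G) (χ : W →* ℂˣ),
      Submodule.map (ρ g) (weightSpace ρ W χ) = weightSpace ρ W (conjChar W g χ))
    (htrans : ∀ χ ∈ Λ, ∀ χ' ∈ Λ, ∃ g : G, conjChar W g χ = χ') :
    ρ.IsIrreducible' :=
  irreducible_of_transitive_one_dimensional_weight_spaces_general ρ W hN Λ hsum hdim hperm htrans
end
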